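/- arXiv:2508.01154 — 2 statements merged into one kernel-verified Lean document; each statement's English description precedes it below -/
import Mathlib

section
/- Let a, b, c, e > 0 with a·e < 2·b·c, and let p, q be reals with p + q > 1 and q > 0, p + q - 1 > 0. Then ∫₀^∞ dx/((ax+b)^p (cx+e)^q) = a^{q-1}/(b^{p+q-1} c^q (p+q-1)) · ₂F₁(q, p+q-1; p+q; 1 - ae/(bc)). -/
/-!
The substitution `x = (b/a)(1 - t)/t` maps `(0, 1)` onto `(0, ∞)` and turns the integrand into
a constant times `t^(s-1) (1 - z t)^(-q)`, where `s = p + q - 1` and `z = 1 - ae/(bc)`; the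
hypothesis `ae < 2bc` says exactly that `|z| < 1`. Expanding `(1 - z t)^(-q)` in its binomial
series and integrating term by term (the series of norms converges because `|z| < 1`) gives
`∑ (q)ₙ zⁿ / (n! (s + n))`, and `(s)ₙ / (s + 1)ₙ = s / (s + n)` identifies this with
`₂F₁(q, s; s + 1; z) / s`.
-/

open MeasureTheory Real Set

/-- The Gauss hypergeometric function `₂F₁(a,b;c;z)`, defined by its power series
`∑ (a)ₙ(b)ₙ/((c)ₙ n!) zⁿ` (with `(q)ₙ` the rising Pochhammer symbol). -/
noncomputable def hyp2F1 (a b c z : ℝ) : ℝ :=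
  ∑' n : ℕ,
    (Polynomial.eval a (ascPochhammer ℝ n) * Polynomial.eval b (ascPochhammer ℝ n) /
      (Polynomial.eval c (ascPochhammer ℝ n) * (n.factorial : ℝ))) * z ^ n

lemma ascPochhammer_eval_div_factorial_eq_choose {K : Type*} [Field K] [CharZero K]
    (q : K) (n : ℕ) :
    (ascPochhammer K n).eval q / n.factorial = Ring.choose (q + n - 1) n := by
  rw [← Ring.multichoose_eq, div_eq_iff (Nat.cast_ne_zero.2 n.factorial_ne_zero), mul_comm,
    ← nsmul_eq_mul, Ring.factorial_nsmul_multichoose_eq_ascPochhammer,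
    Polynomial.ascPochhammer_smeval_cast, Polynomial.ascPochhammer_smeval_eq_eval]

lemma ascPochhammer_eval_mul_add {S : Type*} [CommSemiring S] (s : S) (n : ℕ) :
    (ascPochhammer S n).eval s * (s + n) = s * (ascPochhammer S n).eval (s + 1) := by
  rw [← ascPochhammer_succ_eval, ascPochhammer_succ_left]
  simp

lemma hyp2F1_add_one_eq_tsum (a : ℝ) {s : ℝ} (hs : 0 < s) (z : ℝ) :
    hyp2F1 a s (s + 1) z =
      s * ∑' n : ℕ, (ascPochhammer ℝ n).eval a / n.factorial * z ^ n / (s + n) := by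
  rw [hyp2F1, ← tsum_mul_left]
  refine tsum_congr fun n ↦ ?_
  have hsn : 0 < s + n := by positivity
  have hpos : 0 < (ascPochhammer ℝ n).eval (s + 1) := ascPochhammer_pos n _ (by linarith)
  rw [eq_div_of_mul_eq hsn.ne' (ascPochhammer_eval_mul_add s n)]
  field_simp

lemma mem_eball_zero_one_iff_abs_lt {u : ℝ} : u ∈ Metric.eball (0 : ℝ) 1 ↔ |u| < 1 := by
  rw [← ENNReal.ofReal_one, Metric.eball_ofReal, Metric.mem_ball, dist_zero_right, norm_eq_abs]

section BinomialSeries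

variable (q : ℝ) {u : ℝ}

lemma hasFPowerSeriesOnBall_one_div_one_sub_rpow :
    HasFPowerSeriesOnBall (fun x ↦ 1 / (1 - x) ^ q)
      (.ofScalars ℝ fun n ↦ (ascPochhammer ℝ n).eval q / n.factorial) 0 1 := by
  simpa only [ascPochhammer_eval_div_factorial_eq_choose, add_sub_right_comm]
    using Real.one_div_one_sub_rpow_hasFPowerSeriesOnBall_zero q

lemma hasSum_ascPochhammer_div_factorial_mul_pow (hu : |u| < 1) :
    HasSum (fun n ↦ (ascPochhammer ℝ n).eval q / n.factorial * u ^ n) ((1 - u) ^ (-q)) := by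
  rw [rpow_neg (by linarith [abs_lt.1 hu]), inv_eq_one_div]
  simpa [FormalMultilinearSeries.ofScalars_apply_eq, mul_comm] using
    (hasFPowerSeriesOnBall_one_div_one_sub_rpow q).hasSum (mem_eball_zero_one_iff_abs_lt.2 hu)

lemma summable_norm_ascPochhammer_div_factorial_mul_pow (hu : |u| < 1) :
    Summable (fun n ↦ ‖(ascPochhammer ℝ n).eval q / n.factorial * u ^ n‖) := by
  simpa [FormalMultilinearSeries.ofScalars_apply_eq, mul_comm] using
    FormalMultilinearSeries.summable_norm_apply _
      (Metric.eball_subset_eball (hasFPowerSeriesOnBall_one_div_one_sub_rpow q).r_le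
        (mem_eball_zero_one_iff_abs_lt.2 hu))

end BinomialSeries

lemma integral_Ioo_zero_one_rpow_sub_one {r : ℝ} (hr : 0 < r) :
    ∫ t in Ioo (0 : ℝ) 1, t ^ (r - 1) = r⁻¹ := by
  rw [← integral_Ioc_eq_integral_Ioo, ← intervalIntegral.integral_of_le zero_le_one,
    integral_rpow (Or.inl (by linarith)), sub_add_cancel, one_rpow, zero_rpow hr.ne', sub_zero,
    one_div]

lemma integral_rpow_mul_one_sub_mul_rpow_neg (q : ℝ) {s z : ℝ} (hs : 0 < s) (hz : |z| < 1) :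
    ∫ t in Ioo (0 : ℝ) 1, t ^ (s - 1) * (1 - z * t) ^ (-q) = hyp2F1 q s (s + 1) z / s := by
  set c : ℕ → ℝ := fun n ↦ (ascPochhammer ℝ n).eval q / n.factorial * z ^ n
  set F : ℕ → ℝ → ℝ := fun n t ↦ c n * t ^ (s + n - 1)
  have hsn (n : ℕ) : 0 < s + n := by positivity
  have hintegral (n : ℕ) : ∫ t in Ioo (0 : ℝ) 1, F n t = c n / (s + n) := by
    rw [integral_const_mul, integral_Ioo_zero_one_rpow_sub_one (hsn n), div_eq_mul_inv]
  have hintegral_norm (n : ℕ) : ∫ t in Ioo (0 : ℝ) 1, ‖F n t‖ = ‖c n‖ / (s + n) := by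
    rw [div_eq_mul_inv, ← integral_Ioo_zero_one_rpow_sub_one (hsn n), ← integral_const_mul]
    refine setIntegral_congr_fun measurableSet_Ioo fun t ht ↦ ?_
    simp only [F, norm_mul, norm_of_nonneg (rpow_nonneg ht.1.le _)]
  have hexpand : ∀ t ∈ Ioo (0 : ℝ) 1, t ^ (s - 1) * (1 - z * t) ^ (-q) = ∑' n, F n t := by
    rintro t ⟨ht0, ht1⟩
    have hzt : |z * t| < 1 := by
      rw [abs_mul, abs_of_pos ht0]
      nlinarith [abs_nonneg z]
    rw [← (hasSum_ascPochhammer_div_factorial_mul_pow q hzt).tsum_eq, ← tsum_mul_left]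
    refine tsum_congr fun n ↦ ?_
    simp only [F, c, add_sub_right_comm s, rpow_add ht0, rpow_natCast, mul_pow]
    ring
  rw [setIntegral_congr_fun measurableSet_Ioo hexpand, ← integral_tsum_of_summable_integral_norm,
    hyp2F1_add_one_eq_tsum q hs, mul_div_cancel_left₀ _ hs.ne']
  · exact tsum_congr hintegral
  · exact fun n ↦ ((intervalIntegral.integrableOn_Ioo_rpow_iff zero_lt_one).2
      (by linarith [hsn n])).const_mul _
  · simp_rw [hintegral_norm]
    refine Summable.of_nonneg_of_le (fun n ↦ by positivity) (fun n ↦ ?_)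
      ((summable_norm_ascPochhammer_div_factorial_mul_pow q hz).div_const s)
    exact div_le_div_of_nonneg_left (norm_nonneg _) hs (by simp)

lemma integral_Ioi_eq_integral_Ioo_div_sq {E : Type*} [NormedAddCommGroup E] [NormedSpace ℝ E]
    {k : ℝ} (hk : 0 < k) (f : ℝ → E) :
    ∫ x in Ioi 0, f x = ∫ t in Ioo (0 : ℝ) 1, (k / t ^ 2) • f (k * (1 - t) / t) := by
  set φ : ℝ → ℝ := fun t ↦ k * t⁻¹ - k
  have hφ : EqOn φ (fun t ↦ k * (1 - t) / t) (Ioo 0 1) := fun t ht ↦ by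
    simp only [φ]
    field_simp [ht.1.ne']
  have himage : φ '' Ioo 0 1 = Ioi 0 := by
    ext x
    refine ⟨?_, fun (hx : 0 < x) ↦ ⟨k / (x + k), ⟨by positivity, ?_⟩, ?_⟩⟩
    · rintro ⟨t, ⟨ht0, ht1⟩, rfl⟩
      exact sub_pos.2 (lt_mul_of_one_lt_right hk ((one_lt_inv₀ ht0).2 ht1))
    · exact (div_lt_one (by positivity)).2 (by linarith)
    · simp only [φ]
      field_simp
      ring
  have hderiv (t : ℝ) (ht : t ∈ Ioo (0 : ℝ) 1) :
      HasDerivWithinAt φ (-(k / t ^ 2)) (Ioo 0 1) t := by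
    refine ((((hasDerivAt_inv ht.1.ne').const_mul k).sub_const k).congr_deriv ?_).hasDerivWithinAt
    ring
  have hinj : InjOn φ (Ioo 0 1) := fun t _ u _ h ↦ by simpa [φ, hk.ne'] using h
  rw [← himage, integral_image_eq_integral_abs_deriv_smul measurableSet_Ioo hderiv hinj]
  refine setIntegral_congr_fun measurableSet_Ioo fun t ht ↦ ?_
  simp only [abs_neg, abs_of_pos (show 0 < k / t ^ 2 by have := ht.1; positivity), hφ ht]

lemma div_div_sq_mul_one_div_rpow_mul_rpow {a b c t u p q : ℝ} (ha : 0 < a) (hb : 0 < b)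
    (hc : 0 < c) (ht : 0 < t) (hu : 0 < u) :
    b / a / t ^ 2 * (1 / ((b / t) ^ p * (b * c / a * u / t) ^ q)) =
      a ^ (q - 1) / (b ^ (p + q - 1) * c ^ q) * (t ^ (p + q - 1 - 1) * u ^ (-q)) := by
  simp (disch := positivity) only [div_rpow, mul_rpow, rpow_sub, rpow_add, rpow_neg, rpow_one]
  field_simp

theorem integral_inv_rpow_mul_rpow_general (a b c e p q : ℝ)
    (ha : 0 < a) (hb : 0 < b) (hc : 0 < c) (he : 0 < e)
    (hae : a * e < 2 * (b * c)) (hpq' : 0 < p + q - 1) :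
    ∫ x in Ioi (0:ℝ), 1 / ((a * x + b) ^ p * (c * x + e) ^ q)
      = a ^ (q - 1) / (b ^ (p + q - 1) * c ^ q * (p + q - 1)) *
        hyp2F1 q (p + q - 1) (p + q) (1 - a * e / (b * c)) := by
  have hw : 0 < a * e / (b * c) := by positivity
  have hz : |1 - a * e / (b * c)| < 1 :=
    abs_lt.2 ⟨by linarith [(div_lt_iff₀ (by positivity)).2 hae], by linarith⟩
  set z := 1 - a * e / (b * c)
  have hintegrand : EqOn
      (fun t ↦ (b / a / t ^ 2) •
        (1 / ((a * (b / a * (1 - t) / t) + b) ^ p * (c * (b / a * (1 - t) / t) + e) ^ q)))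
      (fun t ↦ a ^ (q - 1) / (b ^ (p + q - 1) * c ^ q) *
        (t ^ (p + q - 1 - 1) * (1 - z * t) ^ (-q)))
      (Ioo 0 1) := by
    rintro t ⟨ht0, ht1⟩
    have hx : a * (b / a * (1 - t) / t) + b = b / t := by field_simp; ring
    have hy : c * (b / a * (1 - t) / t) + e = b * c / a * (1 - z * t) / t := by
      simp only [z]; field_simp; ring
    have hzt : 0 < 1 - z * t := by simp only [z]; nlinarith
    simp only [smul_eq_mul, hx, hy]
    exact div_div_sq_mul_one_div_rpow_mul_rpow ha hb hc ht0 hzt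
  rw [integral_Ioi_eq_integral_Ioo_div_sq (div_pos hb ha),
    setIntegral_congr_fun measurableSet_Ioo hintegrand, integral_const_mul,
    integral_rpow_mul_one_sub_mul_rpow_neg q hpq' hz, sub_add_cancel]
  field_simp

/-- For `a,b,c,e > 0` with `ae < 2bc` and `p+q > 1`, `q > 0`, `p+q-1 > 0`:
`∫₀^∞ dx/((ax+b)^p (cx+e)^q)
  = a^(q-1)/(b^(p+q-1) c^q (p+q-1)) · ₂F₁(q, p+q-1; p+q; 1 - ae/(bc))`. -/
theorem integral_inv_rpow_mul_rpow (a b c e p q : ℝ)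
    (ha : 0 < a) (hb : 0 < b) (hc : 0 < c) (he : 0 < e)
    (hae : a * e < 2 * (b * c)) (hpq : 1 < p + q) (hq : 0 < q) (hpq' : 0 < p + q - 1) :
    ∫ x in Ioi (0:ℝ), 1 / ((a * x + b) ^ p * (c * x + e) ^ q)
      = a ^ (q - 1) / (b ^ (p + q - 1) * c ^ q * (p + q - 1)) *
        hyp2F1 q (p + q - 1) (p + q) (1 - a * e / (b * c)) :=
  integral_inv_rpow_mul_rpow_general a b c e p q ha hb hc he hae hpq'
end

section
/- If X and Y are i.i.d. Gamma(α, λ) random variables, then E[|X−Y|/(X+Y)] = Γ(α + 1/2)/(√π · α · Γ(α)). -/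
/-!
Put `T = X / Y`. The integrand is `|T - 1| / (T + 1)`, and `T` has the beta prime density
`Γ(2α) / Γ(α)² · t ^ (α - 1) (1 + t) ^ (-2α)` on `(0, ∞)`: substitute `x = y t` and
integrate out `y`, which is a Gamma integral. Up to sign,
`t ^ (α - 1) (1 + t) ^ (-2α) (1 - t) / (1 + t)` is the derivative of
`F t = t ^ α (1 + t) ^ (-2α) / α`, which increases from `F 0 = 0` to its maximum at `t = 1`
and then decreases to `0` at infinity. So the expectation is
`Γ(2α) / Γ(α)² · 2 F 1 = Γ(2α) 2 ^ (1 - 2α) / (α Γ(α)²)`, and Legendre's duplication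
formula turns this into the stated value.
-/

open MeasureTheory Real ProbabilityTheory

open Set Filter Topology
open scoped ENNReal

lemma measurable_gammaPDF (a r : ℝ) : Measurable (gammaPDF a r) :=
  (measurable_gammaPDFReal a r).ennreal_ofReal

lemma lintegral_gammaMeasure (a r : ℝ) (f : ℝ → ℝ≥0∞) :
    ∫⁻ x, f x ∂gammaMeasure a r = ∫⁻ x in Ioi 0, gammaPDF a r x * f x := by
  rw [gammaMeasure, lintegral_withDensity_eq_lintegral_mul_non_measurable _
    (measurable_gammaPDF a r) (ae_of_all _ fun _ ↦ ENNReal.ofReal_lt_top),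
    setLIntegral_congr Ioi_ae_eq_Ici, setLIntegral_eq_of_support_subset fun x hx ↦ ?_]
  · rfl
  by_contra h
  exact hx (by simp [gammaPDF_of_neg (not_le.mp h)])

lemma ae_pos_gammaMeasure (a r : ℝ) : ∀ᵐ x ∂gammaMeasure a r, 0 < x := by
  have hIic : {x : ℝ | ¬0 < x} = Iic 0 := by ext; simp
  rw [ae_iff, hIic, gammaMeasure, withDensity_apply _ measurableSet_Iic,
    ← setLIntegral_congr Iio_ae_eq_Iic]
  exact lintegral_gammaPDF_of_nonpos le_rfl

lemma lintegral_Ioi_zero_comp_mul_left {c : ℝ} (hc : 0 < c) (f : ℝ → ℝ≥0∞) :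
    ∫⁻ x in Ioi 0, f x = ENNReal.ofReal c * ∫⁻ t in Ioi 0, f (c * t) := by
  rw [← lintegral_const_mul' _ _ ENNReal.ofReal_ne_top]
  conv_lhs => rw [← mul_zero c, ← image_mul_left_Ioi hc]
  rw [lintegral_image_eq_lintegral_abs_deriv_mul measurableSet_Ioi
      (fun t _ ↦ (hasDerivAt_id' t |>.const_mul c).hasDerivWithinAt)
      (mul_right_injective₀ hc.ne').injOn]
  simp [abs_of_pos hc]

noncomputable def betaPrimePDFReal (a b x : ℝ) : ℝ :=
  if 0 ≤ x then Gamma (a + b) / (Gamma a * Gamma b) * x ^ (a - 1) * (1 + x) ^ (-(a + b)) else 0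

lemma mul_gammaPDFReal_mul_gammaPDFReal {a b r y t : ℝ} (ha : 0 < a) (hb : 0 < b) (hr : 0 < r)
    (hy : 0 < y) (ht : 0 < t) :
    y * gammaPDFReal b r y * gammaPDFReal a r (y * t)
      = betaPrimePDFReal a b t * gammaPDFReal (a + b) (r * (1 + t)) y := by
  have h1t : 0 < 1 + t := by linarith
  simp only [gammaPDFReal, betaPrimePDFReal, if_pos hy.le, if_pos ht.le,
    if_pos (mul_pos hy ht).le]
  simp only [mul_rpow hy.le ht.le, mul_rpow hr.le h1t.le, rpow_add hr, rpow_add hy,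
    rpow_neg h1t.le, rpow_sub_one hy.ne', rpow_sub_one ht.ne']
  have hexp : rexp (-(r * y)) * rexp (-(r * (y * t))) = rexp (-(r * (1 + t) * y)) := by
    rw [← exp_add]; ring_nf
  rw [← hexp]
  field_simp

lemma setLIntegral_gammaPDF_Ioi_eq_one {a r : ℝ} (ha : 0 < a) (hr : 0 < r) :
    ∫⁻ x in Ioi 0, gammaPDF a r x = 1 := by
  have := isProbabilityMeasure_gammaMeasure ha hr
  simpa using (lintegral_gammaMeasure a r 1).symm

theorem lintegral_gammaMeasure_prod_comp_div {a b r : ℝ} (ha : 0 < a) (hb : 0 < b) (hr : 0 < r)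
    {g : ℝ → ℝ≥0∞} (hg : Measurable g) :
    ∫⁻ p, g (p.1 / p.2) ∂(gammaMeasure a r).prod (gammaMeasure b r)
      = ∫⁻ t in Ioi 0, ENNReal.ofReal (betaPrimePDFReal a b t) * g t := by
  have := isProbabilityMeasure_gammaMeasure ha hr
  have := isProbabilityMeasure_gammaMeasure hb hr
  rw [lintegral_prod_symm _ (by fun_prop)]
  calc ∫⁻ y, ∫⁻ x, g (x / y) ∂gammaMeasure a r ∂gammaMeasure b r
      = ∫⁻ y in Ioi 0, ∫⁻ t in Ioi 0,
          ENNReal.ofReal (y * gammaPDFReal b r y * gammaPDFReal a r (y * t)) * g t := by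
        simp only [lintegral_gammaMeasure]
        refine setLIntegral_congr_fun measurableSet_Ioi fun y (hy : 0 < y) ↦ ?_
        rw [lintegral_Ioi_zero_comp_mul_left hy, ← lintegral_const_mul' _ _ ENNReal.ofReal_ne_top,
          ← lintegral_const_mul' (gammaPDF b r y) _ ENNReal.ofReal_ne_top]
        refine setLIntegral_congr_fun measurableSet_Ioi fun t _ ↦ ?_
        rw [mul_div_cancel_left₀ t hy.ne', gammaPDF, gammaPDF, ← mul_assoc, ← mul_assoc,
          mul_comm (ENNReal.ofReal (gammaPDFReal b r y)), ← ENNReal.ofReal_mul hy.le,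
          ← ENNReal.ofReal_mul (mul_nonneg hy.le (gammaPDFReal_nonneg hb hr y))]
    _ = ∫⁻ t in Ioi 0, ∫⁻ y in Ioi 0,
          ENNReal.ofReal (y * gammaPDFReal b r y * gammaPDFReal a r (y * t)) * g t :=
        lintegral_lintegral_swap (by fun_prop)
    _ = ∫⁻ t in Ioi 0, ENNReal.ofReal (betaPrimePDFReal a b t) * g t := by
        refine setLIntegral_congr_fun measurableSet_Ioi fun t (ht : 0 < t) ↦ ?_
        rw [setLIntegral_congr_fun measurableSet_Ioi fun y (hy : 0 < y) ↦ by
          rw [mul_gammaPDFReal_mul_gammaPDFReal ha hb hr hy ht,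
            ENNReal.ofReal_mul' (gammaPDFReal_nonneg (add_pos ha hb) (by positivity) y),
            mul_right_comm, ← gammaPDF]]
        rw [lintegral_const_mul _ (measurable_gammaPDF _ _),
          setLIntegral_gammaPDF_Ioi_eq_one (add_pos ha hb) (by positivity), mul_one]

lemma lintegral_Ioi_abs_deriv_of_unimodal {F F' : ℝ → ℝ} {a c m : ℝ} (hac : a ≤ c)
    (hcont : ContinuousOn F (Ici a)) (hderiv : ∀ x ∈ Ioi a, HasDerivAt F (F' x) x)
    (hinc : ∀ x ∈ Ioc a c, 0 ≤ F' x) (hdec : ∀ x ∈ Ioi c, F' x ≤ 0)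
    (hlim : Tendsto F atTop (𝓝 m)) :
    ∫⁻ x in Ioi a, ENNReal.ofReal |F' x|
      = ENNReal.ofReal (F c - F a) + ENNReal.ofReal (F c - m) := by
  have hcontc : ContinuousWithinAt F (Ici c) c :=
    (hcont c hac).mono (Ici_subset_Ici.mpr hac)
  have hderivc : ∀ x ∈ Ioi c, HasDerivAt F (F' x) x :=
    fun x hx ↦ hderiv x (lt_of_le_of_lt hac hx)
  have hderiv_Ioo : ∀ x ∈ Ioo a c, HasDerivAt F (F' x) x := fun x hx ↦ hderiv x hx.1
  have hint_Ioc : IntegrableOn F' (Ioc a c) :=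
    intervalIntegral.integrableOn_deriv_of_nonneg (hcont.mono Icc_subset_Ici_self) hderiv_Ioo
      fun x hx ↦ hinc x (Ioo_subset_Ioc_self hx)
  have h_Ioc : ∫⁻ x in Ioc a c, ENNReal.ofReal |F' x| = ENNReal.ofReal (F c - F a) := by
    rw [setLIntegral_congr_fun measurableSet_Ioc fun x hx ↦ by rw [abs_of_nonneg (hinc x hx)],
      ← ofReal_integral_eq_lintegral_ofReal hint_Ioc
        ((ae_restrict_iff' measurableSet_Ioc).mpr (ae_of_all _ hinc)),
      ← intervalIntegral.integral_of_le hac,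
      intervalIntegral.integral_eq_sub_of_hasDerivAt_of_le hac
        (hcont.mono Icc_subset_Ici_self) hderiv_Ioo
        ((intervalIntegrable_iff_integrableOn_Ioc_of_le hac).mpr hint_Ioc)]
  have h_Ioi : ∫⁻ x in Ioi c, ENNReal.ofReal |F' x| = ENNReal.ofReal (F c - m) := by
    rw [setLIntegral_congr_fun measurableSet_Ioi fun x hx ↦ by rw [abs_of_nonpos (hdec x hx)],
      ← ofReal_integral_eq_lintegral_ofReal (f := fun x ↦ -F' x)
        (integrableOn_Ioi_deriv_of_nonpos hcontc hderivc hdec hlim).neg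
        ((ae_restrict_iff' measurableSet_Ioi).mpr
          (ae_of_all _ fun x hx ↦ neg_nonneg.mpr (hdec x hx))),
      integral_neg, integral_Ioi_of_hasDerivAt_of_nonpos hcontc hderivc hdec hlim, neg_sub]
  rw [← Ioc_union_Ioi_eq_Ioi hac, lintegral_union measurableSet_Ioi Ioc_disjoint_Ioi_same,
    h_Ioc, h_Ioi]

lemma hasDerivAt_rpow_mul_one_add_rpow_div {α : ℝ} (hα : 0 < α) {t : ℝ} (ht : 0 < t) :
    HasDerivAt (fun t ↦ t ^ α * (1 + t) ^ (-(α + α)) / α)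
      (t ^ (α - 1) * (1 + t) ^ (-(α + α)) * ((1 - t) / (1 + t))) t := by
  have h1t : 0 < 1 + t := by linarith
  refine (((hasDerivAt_rpow_const (p := α) (Or.inl ht.ne')).mul
    (((hasDerivAt_id' t).const_add 1).rpow_const (p := -(α + α)) (Or.inl h1t.ne'))).div_const
    α).congr_deriv ?_
  rw [rpow_sub_one ht.ne', rpow_sub_one h1t.ne']
  field_simp
  ring

lemma continuousOn_rpow_mul_one_add_rpow_div {α : ℝ} (hα : 0 < α) :
    ContinuousOn (fun t ↦ t ^ α * (1 + t) ^ (-(α + α)) / α) (Ici 0) := by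
  intro t (ht : 0 ≤ t)
  have h1t : (1 + t) ≠ 0 := by linarith
  exact (((continuous_rpow_const hα.le).continuousAt.mul
    ((continuousAt_const.add continuousAt_id).rpow_const (Or.inl h1t))).div_const
    α).continuousWithinAt

lemma tendsto_rpow_mul_one_add_rpow_div_atTop {α : ℝ} (hα : 0 < α) :
    Tendsto (fun t ↦ t ^ α * (1 + t) ^ (-(α + α)) / α) atTop (𝓝 0) := by
  have hbound :
      ∀ᶠ t in atTop, t ^ α * (1 + t) ^ (-(α + α)) / α ≤ (1 + t) ^ (-α) / α := by
    filter_upwards [eventually_ge_atTop 0] with t ht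
    have h1t : 0 < 1 + t := by linarith
    gcongr
    calc t ^ α * (1 + t) ^ (-(α + α)) ≤ (1 + t) ^ α * (1 + t) ^ (-(α + α)) := by
          gcongr; linarith
      _ = (1 + t) ^ (-α) := by rw [← rpow_add h1t]; ring_nf
  have hnonneg : ∀ᶠ t in atTop, 0 ≤ t ^ α * (1 + t) ^ (-(α + α)) / α := by
    filter_upwards [eventually_ge_atTop 0] with t ht
    have h1t : 0 < 1 + t := by linarith
    positivity
  have hdecay : Tendsto (fun t : ℝ ↦ (1 + t) ^ (-α) / α) atTop (𝓝 0) := by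
    simpa using ((tendsto_rpow_neg_atTop hα).comp
      (tendsto_atTop_add_const_left _ 1 tendsto_id)).div_const α
  exact tendsto_of_tendsto_of_tendsto_of_le_of_le' tendsto_const_nhds hdecay hnonneg hbound

lemma Gamma_add_self_div_mul_two_mul_rpow_neg_div {α : ℝ} (hα : 0 < α) :
    Gamma (α + α) / (Gamma α * Gamma α) * (2 * (2 : ℝ) ^ (-(α + α)) / α)
      = Gamma (α + 1 / 2) / (√π * α * Gamma α) := by
  have hdup := Gamma_mul_Gamma_add_half α
  have hpow : 2 * (2 : ℝ) ^ (-(α + α)) = 2 ^ (1 - 2 * α) := by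
    rw [show 1 - 2 * α = 1 + -(α + α) by ring, rpow_add two_pos, rpow_one]
  rw [hpow, ← two_mul, div_mul_div_comm, div_eq_div_iff (by positivity) (by positivity)]
  linear_combination (-(α * Gamma α)) * hdup

theorem lintegral_betaPrimePDFReal_mul_abs_sub_div_add {α : ℝ} (hα : 0 < α) :
    ∫⁻ t in Ioi 0,
        ENNReal.ofReal (betaPrimePDFReal α α t) * ENNReal.ofReal (|t - 1| / (t + 1))
      = ENNReal.ofReal (Gamma (α + 1 / 2) / (√π * α * Gamma α)) := by
  set F' : ℝ → ℝ := fun t ↦ t ^ (α - 1) * (1 + t) ^ (-(α + α)) * ((1 - t) / (1 + t))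
  have hinc : ∀ t ∈ Ioc (0:ℝ) 1, 0 ≤ F' t := fun t ht ↦ by
    have h1t : 0 < 1 + t := by linarith [ht.1]
    exact mul_nonneg (mul_nonneg (rpow_nonneg ht.1.le _) (rpow_nonneg h1t.le _))
      (div_nonneg (by linarith [ht.2]) h1t.le)
  have hdec : ∀ t ∈ Ioi (1:ℝ), F' t ≤ 0 := fun t (ht : 1 < t) ↦ by
    have h1t : 0 < 1 + t := by linarith
    exact mul_nonpos_of_nonneg_of_nonpos
      (mul_nonneg (rpow_nonneg (by linarith) _) (rpow_nonneg h1t.le _))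
      (div_nonpos_of_nonpos_of_nonneg (by linarith) h1t.le)
  have hvar := lintegral_Ioi_abs_deriv_of_unimodal zero_le_one
    (continuousOn_rpow_mul_one_add_rpow_div hα)
    (fun t ht ↦ hasDerivAt_rpow_mul_one_add_rpow_div hα ht) hinc hdec
    (tendsto_rpow_mul_one_add_rpow_div_atTop hα)
  have hF0 : (0:ℝ) ^ α * (1 + 0) ^ (-(α + α)) / α = 0 := by simp [zero_rpow hα.ne']
  have hF1 : (1:ℝ) ^ α * (1 + 1) ^ (-(α + α)) / α = 2 ^ (-(α + α)) / α := by norm_num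
  have hGG : 0 ≤ Gamma (α + α) / (Gamma α * Gamma α) := by
    have := Gamma_pos_of_pos hα
    have := Gamma_pos_of_pos (add_pos hα hα)
    positivity
  calc ∫⁻ t in Ioi 0,
        ENNReal.ofReal (betaPrimePDFReal α α t) * ENNReal.ofReal (|t - 1| / (t + 1))
      = ∫⁻ t in Ioi 0, ENNReal.ofReal (Gamma (α + α) / (Gamma α * Gamma α))
          * ENNReal.ofReal |F' t| := by
        refine setLIntegral_congr_fun measurableSet_Ioi fun t (ht : 0 < t) ↦ ?_
        have h1t : 0 < 1 + t := by linarith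
        have h1t' : 0 < t + 1 := by linarith
        rw [← ENNReal.ofReal_mul hGG, ← ENNReal.ofReal_mul' (div_nonneg (abs_nonneg _) h1t'.le)]
        congr 1
        simp only [betaPrimePDFReal, if_pos ht.le, F', abs_mul, abs_div, abs_of_pos h1t,
          abs_of_pos (rpow_pos_of_pos ht _), abs_of_pos (rpow_pos_of_pos h1t _), abs_sub_comm t 1,
          add_comm t 1]
        ring
    _ = ENNReal.ofReal (Gamma (α + 1 / 2) / (√π * α * Gamma α)) := by
        rw [lintegral_const_mul' _ _ ENNReal.ofReal_ne_top, hvar, hF0, hF1, sub_zero,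
          ← ENNReal.ofReal_add (by positivity) (by positivity), ← ENNReal.ofReal_mul hGG,
          ← Gamma_add_self_div_mul_two_mul_rpow_neg_div hα]
        ring_nf

/-- For i.i.d. `X, Y ~ Gamma(α, λ)`, `E[|X−Y|/(X+Y)] = Γ(α+1/2)/(√π·α·Γ(α))`
(the Gini coefficient of the gamma distribution). -/
theorem gini_gamma {Ω : Type*} [MeasurableSpace Ω]
    (P : Measure Ω) [IsProbabilityMeasure P] (X Y : Ω → ℝ)
    (hX : Measurable X) (hY : Measurable Y)
    (α l : ℝ) (hα : 0 < α) (hl : 0 < l)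
    (hXlaw : Measure.map X P = gammaMeasure α l)
    (hYlaw : Measure.map Y P = gammaMeasure α l)
    (hindep : IndepFun X Y P) :
    ∫ ω, |X ω - Y ω| / (X ω + Y ω) ∂P
      = Real.Gamma (α + 1/2) / (Real.sqrt π * α * Real.Gamma α) := by
  have := isProbabilityMeasure_gammaMeasure hα hl
  have hjoint : P.map (fun ω ↦ (X ω, Y ω)) = (gammaMeasure α l).prod (gammaMeasure α l) := by
    rw [(indepFun_iff_map_prod_eq_prod_map_map hX.aemeasurable hY.aemeasurable).mp hindep,
      hXlaw, hYlaw]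
  have hpos : ∀ᵐ p ∂(gammaMeasure α l).prod (gammaMeasure α l), 0 < p.1 ∧ 0 < p.2 :=
    (Measure.quasiMeasurePreserving_fst.ae (ae_pos_gammaMeasure α l)).and
      (Measure.quasiMeasurePreserving_snd.ae (ae_pos_gammaMeasure α l))
  have hmeas : Measurable fun p : ℝ × ℝ ↦ |p.1 - p.2| / (p.1 + p.2) := by fun_prop
  calc ∫ ω, |X ω - Y ω| / (X ω + Y ω) ∂P
      = ∫ p, |p.1 - p.2| / (p.1 + p.2) ∂(gammaMeasure α l).prod (gammaMeasure α l) := by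
        rw [← hjoint, integral_map (hX.prodMk hY).aemeasurable hmeas.aestronglyMeasurable]
    _ = (∫⁻ p, ENNReal.ofReal (|p.1 / p.2 - 1| / (p.1 / p.2 + 1))
          ∂(gammaMeasure α l).prod (gammaMeasure α l)).toReal := by
        rw [integral_eq_lintegral_of_nonneg_ae
          (hpos.mono fun p hp ↦ div_nonneg (abs_nonneg _) (add_pos hp.1 hp.2).le)
          hmeas.aestronglyMeasurable]
        refine congrArg _ (lintegral_congr_ae (hpos.mono fun p ⟨_, hy⟩ ↦ ?_))
        dsimp only
        rw [div_sub_one hy.ne', div_add_one hy.ne', abs_div, abs_of_pos hy,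
          div_div_div_cancel_right₀ hy.ne']
    _ = Gamma (α + 1 / 2) / (√π * α * Gamma α) := by
        rw [lintegral_gammaMeasure_prod_comp_div
            (g := fun t ↦ ENNReal.ofReal (|t - 1| / (t + 1))) hα hα hl (by fun_prop),
          lintegral_betaPrimePDFReal_mul_abs_sub_div_add hα,
          ENNReal.toReal_ofReal (by have := Gamma_pos_of_pos hα; positivity)]
end
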